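/- Let (X_j, Y_j)_{j\ge1} be i.i.d. square-integrable pairs, N \le r_L N \le r_i N integers. Define \Delta_L = (1/N)\sum_{j=1}^N X_j - (1/(r_L N))\sum_{j=1}^{r_L N} X_j and \Delta_i = (1/(r_L N))\sum_{j=1}^{r_L N} Y_j - (1/(r_i N))\sum_{j=1}^{r_i N} Y_j, with all sample sets nested. Then Cov[\Delta_L, \Delta_i] = 0. -/

import Mathlib

open MeasureTheory ProbabilityTheory Finset

/-- Covariance of two real-valued random variables. -/
noncomputable def cov {Ω : Type*} [MeasurableSpace Ω] (μ : Measure Ω) (X Y : Ω → ℝ) : ℝ :=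
  ∫ ω, (X ω - ∫ x, X x ∂μ) * (Y ω - ∫ x, Y x ∂μ) ∂μ

section Aux

variable {Ω : Type*} [MeasurableSpace Ω] (μ : Measure Ω) [IsProbabilityMeasure μ]

lemma memL2_integrable_mul {f g : Ω → ℝ} (hf : MemLp f 2 μ) (hg : MemLp g 2 μ) :
    Integrable (fun ω => f ω * g ω) μ := by
  have h1 : Integrable (fun ω => (f ω + g ω) ^ 2) μ := (hf.add hg).integrable_sq
  have h2 : Integrable (fun ω => (f ω - g ω) ^ 2) μ := (hf.sub hg).integrable_sq
  have h3 : Integrable (fun ω => ((f ω + g ω) ^ 2 - (f ω - g ω) ^ 2) / 4) μ :=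
    (h1.sub h2).div_const 4
  have heq : (fun ω => ((f ω + g ω) ^ 2 - (f ω - g ω) ^ 2) / 4) = fun ω => f ω * g ω := by
    funext ω; ring
  rwa [heq] at h3

lemma cov_eq {f g : Ω → ℝ} (hf : MemLp f 2 μ) (hg : MemLp g 2 μ) :
    cov μ f g = (∫ ω, f ω * g ω ∂μ) - (∫ ω, f ω ∂μ) * (∫ ω, g ω ∂μ) := by
  have hfi : Integrable f μ := hf.integrable one_le_two
  have hgi : Integrable g μ := hg.integrable one_le_two
  have hfg := memL2_integrable_mul μ hf hg
  set a := ∫ ω, f ω ∂μ with ha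
  set b := ∫ ω, g ω ∂μ with hb
  have heq : (fun ω => (f ω - a) * (g ω - b))
      = fun ω => f ω * g ω - a * g ω - b * f ω + a * b := by
    funext ω; ring
  have i1 : Integrable (fun ω => a * g ω) μ := hgi.const_mul a
  have i2 : Integrable (fun ω => b * f ω) μ := hfi.const_mul b
  have i3 : Integrable (fun ω => f ω * g ω - a * g ω) μ := hfg.sub i1
  have i4 : Integrable (fun ω => f ω * g ω - a * g ω - b * f ω) μ := i3.sub i2
  unfold cov
  rw [← ha, ← hb, heq]
  rw [integral_add i4 (integrable_const _), integral_sub i3 i2, integral_sub hfg i1,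
    integral_const_mul, integral_const_mul, integral_const]
  simp [measure_univ]
  ring

lemma cov_indep {f g : Ω → ℝ} (hf : MemLp f 2 μ) (hg : MemLp g 2 μ)
    (h : IndepFun f g μ) : cov μ f g = 0 := by
  rw [cov_eq μ hf hg]
  have := h.integral_fun_mul_eq_mul_integral hf.aestronglyMeasurable hg.aestronglyMeasurable
  have h' : (∫ ω, f ω * g ω ∂μ) = (∫ ω, f ω ∂μ) * (∫ ω, g ω ∂μ) := this
  rw [h', sub_self]

lemma cov_sum_sum {ι : Type*} (s t : Finset ι) (X Y : ι → Ω → ℝ)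
    (hX : ∀ i ∈ s, MemLp (X i) 2 μ) (hY : ∀ j ∈ t, MemLp (Y j) 2 μ) :
    cov μ (fun ω => ∑ i ∈ s, X i ω) (fun ω => ∑ j ∈ t, Y j ω)
      = ∑ i ∈ s, ∑ j ∈ t, cov μ (X i) (Y j) := by
  have hXs : MemLp (fun ω => ∑ i ∈ s, X i ω) 2 μ := by
    have h := memLp_finset_sum' (μ := μ) s hX
    have e : (∑ i ∈ s, X i) = fun ω => ∑ i ∈ s, X i ω := by
      funext ω; simp
    rwa [e] at h
  have hYs : MemLp (fun ω => ∑ j ∈ t, Y j ω) 2 μ := by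
    have h := memLp_finset_sum' (μ := μ) t hY
    have e : (∑ j ∈ t, Y j) = fun ω => ∑ j ∈ t, Y j ω := by
      funext ω; simp
    rwa [e] at h
  rw [cov_eq μ hXs hYs]
  have hmul : (fun ω => (∑ i ∈ s, X i ω) * ∑ j ∈ t, Y j ω)
      = fun ω => ∑ i ∈ s, ∑ j ∈ t, X i ω * Y j ω := by
    funext ω; rw [Finset.sum_mul_sum]
  rw [hmul]
  rw [integral_finset_sum s (fun i hi =>
    integrable_finset_sum t (fun j hj => memL2_integrable_mul μ (hX i hi) (hY j hj)))]
  have h2 : ∀ i ∈ s, (∫ ω, ∑ j ∈ t, X i ω * Y j ω ∂μ)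
      = ∑ j ∈ t, ∫ ω, X i ω * Y j ω ∂μ := fun i hi =>
    integral_finset_sum t (fun j hj => memL2_integrable_mul μ (hX i hi) (hY j hj))
  rw [Finset.sum_congr rfl h2]
  rw [integral_finset_sum s (fun i hi => (hX i hi).integrable one_le_two),
    integral_finset_sum t (fun j hj => (hY j hj).integrable one_le_two),
    Finset.sum_mul_sum, ← Finset.sum_sub_distrib]
  refine Finset.sum_congr rfl fun i hi => ?_
  rw [← Finset.sum_sub_distrib]
  exact Finset.sum_congr rfl fun j hj => (cov_eq μ (hX i hi) (hY j hj)).symm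

lemma cov_const_mul (c d : ℝ) (f g : Ω → ℝ) :
    cov μ (fun ω => c * f ω) (fun ω => d * g ω) = c * d * cov μ f g := by
  unfold cov
  simp only [integral_const_mul]
  rw [← integral_const_mul (c * d) (fun ω => (f ω - ∫ x, f x ∂μ) * (g ω - ∫ x, g x ∂μ))]
  refine integral_congr_ae (Filter.Eventually.of_forall fun ω => ?_)
  ring

end Aux

/-- Case (3a) of the ACV-KL covariance computation: for i.i.d. pairs `(Xⱼ, Yⱼ)` with
nested sample sets of sizes `N ≤ m ≤ n` (`m = r_L N`, `n = r_i N`), the discrepancy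
`Δ_L` of the `X`-means over the first `N` and first `m` samples is uncorrelated with the
discrepancy `Δᵢ` of the `Y`-means over the first `m` and first `n` samples. -/
theorem stmt19 {Ω : Type*} [MeasurableSpace Ω] (μ : Measure Ω) [IsProbabilityMeasure μ]
    (Z : ℕ → Ω → ℝ × ℝ) (hmeas : ∀ j, Measurable (Z j))
    (hindep : iIndepFun Z μ)
    (hident : ∀ j, IdentDistrib (Z j) (Z 0) μ μ)
    (hL2X : MemLp (fun ω => (Z 0 ω).1) 2 μ) (hL2Y : MemLp (fun ω => (Z 0 ω).2) 2 μ)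
    (N m n : ℕ) (hN : 1 ≤ N) (hNm : N ≤ m) (hmn : m ≤ n) :
    cov μ
      (fun ω => (1 / N : ℝ) * ∑ j ∈ Finset.range N, (Z j ω).1
        - (1 / m : ℝ) * ∑ j ∈ Finset.range m, (Z j ω).1)
      (fun ω => (1 / m : ℝ) * ∑ j ∈ Finset.range m, (Z j ω).2
        - (1 / n : ℝ) * ∑ j ∈ Finset.range n, (Z j ω).2)
      = 0 := by
  have hNpos : (0:ℝ) < N := by exact_mod_cast hN
  have hmpos : (0:ℝ) < m := lt_of_lt_of_le hNpos (by exact_mod_cast hNm)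
  have hnpos : (0:ℝ) < n := lt_of_lt_of_le hmpos (by exact_mod_cast hmn)
  -- coefficients
  set a : ℕ → ℝ := fun j => (if j < N then (1/N : ℝ) else 0) - (if j < m then (1/m : ℝ) else 0)
    with ha
  set b : ℕ → ℝ := fun j => (if j < m then (1/m : ℝ) else 0) - (if j < n then (1/n : ℝ) else 0)
    with hb
  -- square integrability of coordinates
  have hX2 : ∀ j, MemLp (fun ω => (Z j ω).1) 2 μ := fun j =>
    ((hident j).comp measurable_fst).symm.memLp_snd hL2X
  have hY2 : ∀ j, MemLp (fun ω => (Z j ω).2) 2 μ := fun j =>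
    ((hident j).comp measurable_snd).symm.memLp_snd hL2Y
  -- reduction of indicator sums
  have key : ∀ (K : ℕ), 1 ≤ K → K ≤ n → ∀ (W : ℕ → Ω → ℝ) (ω : Ω),
      ∑ j ∈ Finset.range n, (if j < K then (1/K : ℝ) else 0) * W j ω
        = (1/K : ℝ) * ∑ j ∈ Finset.range K, W j ω := by
    intro K hK hKn W ω
    rw [Finset.mul_sum,
      ← Finset.sum_subset (Finset.range_subset_range.mpr hKn)
        (fun x _ hx => by rw [if_neg (fun h => hx (Finset.mem_range.mpr h)), zero_mul])]
    exact Finset.sum_congr rfl fun j hj => by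
      rw [if_pos (Finset.mem_range.mp hj)]
  -- rewrite the two discrepancies as single sums
  have hfun1 : (fun ω => (1 / N : ℝ) * ∑ j ∈ Finset.range N, (Z j ω).1
        - (1 / m : ℝ) * ∑ j ∈ Finset.range m, (Z j ω).1)
      = fun ω => ∑ j ∈ Finset.range n, a j * (Z j ω).1 := by
    funext ω
    simp only [ha, sub_mul]
    rw [Finset.sum_sub_distrib,
      key N hN (le_trans hNm hmn) (fun j ω => (Z j ω).1) ω,
      key m (le_trans hN hNm) hmn (fun j ω => (Z j ω).1) ω]
  have hfun2 : (fun ω => (1 / m : ℝ) * ∑ j ∈ Finset.range m, (Z j ω).2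
        - (1 / n : ℝ) * ∑ j ∈ Finset.range n, (Z j ω).2)
      = fun ω => ∑ j ∈ Finset.range n, b j * (Z j ω).2 := by
    funext ω
    simp only [hb, sub_mul]
    rw [Finset.sum_sub_distrib,
      key m (le_trans hN hNm) hmn (fun j ω => (Z j ω).2) ω,
      key n (le_trans (le_trans hN hNm) hmn) le_rfl (fun j ω => (Z j ω).2) ω]
  rw [hfun1, hfun2]
  -- expand covariance bilinearly
  rw [cov_sum_sum μ (Finset.range n) (Finset.range n)
    (fun j ω => a j * (Z j ω).1) (fun j ω => b j * (Z j ω).2)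
    (fun j _ => (hX2 j).const_mul (a j)) (fun j _ => (hY2 j).const_mul (b j))]
  -- pairwise covariances
  set c : ℝ := cov μ (fun ω => (Z 0 ω).1) (fun ω => (Z 0 ω).2) with hc
  have hpair : ∀ j k, cov μ (fun ω => (Z j ω).1) (fun ω => (Z k ω).2)
      = if j = k then c else 0 := by
    intro j k
    by_cases hjk : j = k
    · subst hjk
      rw [if_pos rfl, hc, cov_eq μ (hX2 j) (hY2 j), cov_eq μ hL2X hL2Y]
      have h1 : ∫ ω, (Z j ω).1 ∂μ = ∫ ω, (Z 0 ω).1 ∂μ :=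
        ((hident j).comp measurable_fst).integral_eq
      have h2 : ∫ ω, (Z j ω).2 ∂μ = ∫ ω, (Z 0 ω).2 ∂μ :=
        ((hident j).comp measurable_snd).integral_eq
      have h3 : ∫ ω, (Z j ω).1 * (Z j ω).2 ∂μ = ∫ ω, (Z 0 ω).1 * (Z 0 ω).2 ∂μ :=
        ((hident j).comp (measurable_fst.mul measurable_snd)).integral_eq
      rw [h1, h2, h3]
    · rw [if_neg hjk]
      exact cov_indep μ (hX2 j) (hY2 k)
        (((hindep.indepFun hjk).comp measurable_fst measurable_snd))
  have hterm : ∀ j ∈ Finset.range n, ∀ k ∈ Finset.range n,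
      cov μ (fun ω => a j * (Z j ω).1) (fun ω => b k * (Z k ω).2)
        = if j = k then a j * b k * c else 0 := by
    intro j _ k _
    rw [cov_const_mul, hpair j k]
    by_cases hjk : j = k <;> simp [hjk]
  calc ∑ j ∈ Finset.range n, ∑ k ∈ Finset.range n,
        cov μ (fun ω => a j * (Z j ω).1) (fun ω => b k * (Z k ω).2)
      = ∑ j ∈ Finset.range n, ∑ k ∈ Finset.range n,
          (if j = k then a j * b k * c else 0) := by
        refine Finset.sum_congr rfl fun j hj => Finset.sum_congr rfl fun k hk => ?_
        exact hterm j hj k hk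
    _ = ∑ j ∈ Finset.range n, a j * b j * c := by
        refine Finset.sum_congr rfl fun j hj => ?_
        rw [Finset.sum_ite_eq (Finset.range n) j (fun k => a j * b k * c), if_pos hj]
    _ = (∑ j ∈ Finset.range n, a j * b j) * c := by rw [Finset.sum_mul]
    _ = 0 := by
        have key2 : ∀ (K K' : ℕ), 1 ≤ K → K ≤ K' → K' ≤ n →
            ∑ j ∈ Finset.range n,
              (if j < K then (1/K : ℝ) else 0) * (if j < K' then (1/K' : ℝ) else 0)
              = 1/K' := by
          intro K K' hK hKK' hK'n
          have hKpos : (0:ℝ) < K := by exact_mod_cast hK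
          have hK'pos : (0:ℝ) < K' := lt_of_lt_of_le hKpos (by exact_mod_cast hKK')
          rw [← Finset.sum_subset (Finset.range_subset_range.mpr (le_trans hKK' hK'n))
            (fun x _ hx => by
              rw [if_neg (fun h => hx (Finset.mem_range.mpr h)), zero_mul])]
          have : ∀ j ∈ Finset.range K,
              (if j < K then (1/K : ℝ) else 0) * (if j < K' then (1/K' : ℝ) else 0)
                = (1/K : ℝ) * (1/K' : ℝ) := fun j hj => by
            rw [if_pos (Finset.mem_range.mp hj),
              if_pos (lt_of_lt_of_le (Finset.mem_range.mp hj) hKK')]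
          rw [Finset.sum_congr rfl this, Finset.sum_const, Finset.card_range,
            nsmul_eq_mul]
          field_simp
        have e1 := key2 N m hN hNm hmn
        have e2 := key2 N n hN (le_trans hNm hmn) le_rfl
        have e3 := key2 m m (le_trans hN hNm) le_rfl hmn
        have e4 := key2 m n (le_trans hN hNm) hmn le_rfl
        have hab : ∑ j ∈ Finset.range n, a j * b j = 0 := by
          have expand : ∀ j, a j * b j =
              (if j < N then (1/N : ℝ) else 0) * (if j < m then (1/m : ℝ) else 0)
              - (if j < N then (1/N : ℝ) else 0) * (if j < n then (1/n : ℝ) else 0)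
              - (if j < m then (1/m : ℝ) else 0) * (if j < m then (1/m : ℝ) else 0)
              + (if j < m then (1/m : ℝ) else 0) * (if j < n then (1/n : ℝ) else 0) := by
            intro j; simp only [ha, hb]; ring
          rw [Finset.sum_congr rfl fun j _ => expand j]
          rw [Finset.sum_add_distrib, Finset.sum_sub_distrib, Finset.sum_sub_distrib,
            e1, e2, e3, e4]
          ring
        rw [hab, zero_mul]
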